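/- arXiv:1503.04305 — 11 statements merged into one kernel-verified Lean document; each statement's English description precedes it below -/
import Mathlib

section
/- Let κ > 0 be a real number with κ² < 1/8. Let K : ℝ → ℝ be continuous with K(t) ≤ κ² for all t ∈ [0,1] and ∫₀¹ K(t) dt ≤ −κ². Let u : ℝ → ℝ be differentiable on [0,1] with u(0) = 0 and u′(t) = −K(t) − u(t)² for all t ∈ [0,1]. Then u(1) ≥ κ²/2. -/
open Real MeasureTheory intervalIntegral

theorem riccati_estimate
    (κ : ℝ) (hκ : 0 < κ) (hκ2 : κ ^ 2 < 1/8)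
    (K : ℝ → ℝ) (hKcont : Continuous K)
    (hKle : ∀ t ∈ Set.Icc (0:ℝ) 1, K t ≤ κ ^ 2)
    (hKint : ∫ t in (0:ℝ)..1, K t ≤ -κ ^ 2)
    (u : ℝ → ℝ) (hu0 : u 0 = 0)
    (hu : ∀ t ∈ Set.Icc (0:ℝ) 1, HasDerivAt u (-K t - u t ^ 2) t) :
    u 1 ≥ κ ^ 2 / 2 := by
  have hκsq : 0 < κ ^ 2 := pow_pos hκ 2
  have hucont : ContinuousOn u (Set.Icc (0:ℝ) 1) :=
    fun t ht => ((hu t ht).continuousAt).continuousWithinAt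
  -- an opaque threshold θ with θ² = κ²/2 and 2κ² < θ
  obtain ⟨θ, hθ2, hθgt, hθpos⟩ :
      ∃ θ : ℝ, θ ^ 2 = κ ^ 2 / 2 ∧ 2 * κ ^ 2 < θ ∧ 0 < θ := by
    refine ⟨κ * Real.sqrt 2 / 2, ?_, ?_, ?_⟩
    · have h2 : Real.sqrt 2 ^ 2 = 2 := Real.sq_sqrt (by norm_num)
      field_simp
      nlinarith [h2]
    · have hs2 : Real.sqrt 2 ^ 2 = 2 := Real.sq_sqrt (by norm_num)
      have hspos : 0 < Real.sqrt 2 := Real.sqrt_pos.mpr (by norm_num)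
      nlinarith [sq_nonneg (Real.sqrt 2 - 4 * κ), mul_pos hκ hspos]
    · positivity
  -- Step 1: lower bound -u t ≤ 2κ² t on [0,1]
  have hlow : ∀ t ∈ Set.Icc (0:ℝ) 1, -u t ≤ 2 * κ ^ 2 * t := by
    refine fun t ht => image_le_of_deriv_right_lt_deriv_boundary
      (f := fun t => -u t) (f' := fun t => -(-K t - u t ^ 2))
      (B := fun t => 2 * κ ^ 2 * t) (B' := fun _ => 2 * κ ^ 2)
      hucont.neg
      (fun x hx => ((hu x (Set.Ico_subset_Icc_self hx)).neg).hasDerivWithinAt)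
      (by simp [hu0])
      (fun x => by simpa using (hasDerivAt_id x).const_mul (2 * κ ^ 2))
      ?_ ht
    intro x hx hfB
    have hfB' : -u x = 2 * κ ^ 2 * x := hfB
    have hux : u x = -(2 * κ ^ 2 * x) := by linarith
    have hKx := hKle x (Set.Ico_subset_Icc_self hx)
    have hx0 : (0:ℝ) ≤ x := hx.1
    have hx1 : x < 1 := hx.2
    have hxsq : x ^ 2 ≤ 1 := by nlinarith
    have h4 : κ ^ 2 * κ ^ 2 < κ ^ 2 / 8 := by nlinarith
    show -(-K x - u x ^ 2) < 2 * κ ^ 2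
    rw [hux]
    have hsq : (-(2 * κ ^ 2 * x)) ^ 2 = 4 * (κ ^ 2 * κ ^ 2) * x ^ 2 := by ring
    rw [hsq]
    nlinarith [mul_nonneg (mul_nonneg (by norm_num : (0:ℝ) ≤ 4) hκsq.le) hκsq.le]
  -- Step 2: FTC
  have hderiv' : ∀ t ∈ Set.uIcc (0:ℝ) 1, HasDerivAt u (-K t - u t ^ 2) t := by
    rwa [Set.uIcc_of_le (zero_le_one)]
  have hintK : IntervalIntegrable K volume 0 1 := hKcont.intervalIntegrable 0 1
  have hintU : IntervalIntegrable (fun t => u t ^ 2) volume 0 1 := by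
    apply ContinuousOn.intervalIntegrable
    rw [Set.uIcc_of_le (zero_le_one)]
    exact hucont.pow 2
  have hintKneg : IntervalIntegrable (fun t => -K t) volume 0 1 := hintK.neg
  have hintG : IntervalIntegrable (fun t => -K t - u t ^ 2) volume 0 1 :=
    hintKneg.sub hintU
  have hFTC : ∫ t in (0:ℝ)..1, (-K t - u t ^ 2) = u 1 - u 0 :=
    integral_eq_sub_of_hasDerivAt hderiv' hintG
  have hsplit : ∫ t in (0:ℝ)..1, (-K t - u t ^ 2)
      = (∫ t in (0:ℝ)..1, -K t) - ∫ t in (0:ℝ)..1, u t ^ 2 :=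
    integral_sub hintKneg hintU
  have hneg : ∫ t in (0:ℝ)..1, -K t = -∫ t in (0:ℝ)..1, K t :=
    integral_neg
  have hu1 : u 1 = (-∫ t in (0:ℝ)..1, K t) - ∫ t in (0:ℝ)..1, u t ^ 2 := by
    rw [← hneg, ← hsplit, hFTC, hu0, sub_zero]
  -- Step 3: case split
  by_cases hcase : (∫ t in (0:ℝ)..1, u t ^ 2) ≤ κ ^ 2 / 2
  · rw [hu1]; linarith
  · push_neg at hcase
    have hex : ∃ t ∈ Set.Icc (0:ℝ) 1, θ < u t := by
      by_contra h
      push_neg at h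
      have hbound : ∀ t ∈ Set.Icc (0:ℝ) 1, u t ^ 2 ≤ κ ^ 2 / 2 := by
        intro t ht
        have h1 : u t ≤ θ := h t ht
        have h2 : -θ ≤ u t := by
          have h3 := hlow t ht
          have ht1 : t ≤ 1 := ht.2
          have ht0 : 0 ≤ t := ht.1
          nlinarith
        calc u t ^ 2 ≤ θ ^ 2 := sq_le_sq' h2 h1
          _ = κ ^ 2 / 2 := hθ2
      have hle : (∫ t in (0:ℝ)..1, u t ^ 2) ≤ ∫ _t in (0:ℝ)..1, κ ^ 2 / 2 :=
        intervalIntegral.integral_mono_on zero_le_one hintU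
          intervalIntegrable_const hbound
      rw [intervalIntegral.integral_const] at hle
      simp at hle
      linarith
    obtain ⟨t₀, ht₀, hut₀⟩ := hex
    obtain ⟨c, hc_def, hcpos, hclt⟩ :
        ∃ c : ℝ, c = κ ^ 2 / 2 + θ / 2 ∧ 0 < c ∧ 3 * κ ^ 2 / 2 < c := by
      exact ⟨κ ^ 2 / 2 + θ / 2, rfl, by positivity, by linarith⟩
    have hθc : κ ^ 2 / 2 ≤ θ - c := by rw [hc_def]; linarith
    -- Step 4: barrier on [t₀, 1]
    have hbar : -u 1 ≤ c * (1 - t₀) - θ := by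
      refine image_le_of_deriv_right_lt_deriv_boundary
        (f := fun t => -u t) (f' := fun t => -(-K t - u t ^ 2))
        (B := fun t => c * (t - t₀) - θ) (B' := fun _ => c)
        (hucont.neg.mono (Set.Icc_subset_Icc_left ht₀.1))
        (fun y hy => ((hu y ⟨le_trans ht₀.1 hy.1, le_of_lt hy.2⟩).neg).hasDerivWithinAt)
        (by simp; linarith)
        (fun y => by
          simpa using (((hasDerivAt_id y).sub_const t₀).const_mul c).sub_const θ)
        ?_ ⟨ht₀.2, le_refl 1⟩
      intro y hy hfB
      have hfB' : -u y = c * (y - t₀) - θ := hfB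
      have hy0 : (0:ℝ) ≤ y := le_trans ht₀.1 hy.1
      have hy1 : y < 1 := hy.2
      have hKy := hKle y ⟨hy0, le_of_lt hy1⟩
      have huy : u y = θ - c * (y - t₀) := by linarith
      have hyt : 0 ≤ y - t₀ := by linarith [hy.1]
      have hyt1 : y - t₀ ≤ 1 := by linarith [ht₀.1]
      have hcy : c * (y - t₀) ≤ c := by nlinarith
      have hcy0 : 0 ≤ c * (y - t₀) := by positivity
      have huy_ub : u y ≤ θ := by rw [huy]; linarith
      have huy_lb : -θ ≤ u y := by rw [huy]; linarith
      have husq : u y ^ 2 ≤ κ ^ 2 / 2 := by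
        calc u y ^ 2 ≤ θ ^ 2 := sq_le_sq' huy_lb huy_ub
          _ = κ ^ 2 / 2 := hθ2
      show -(-K y - u y ^ 2) < c
      linarith
    have ht₀0 : 0 ≤ t₀ := ht₀.1
    have hc1 : c * (1 - t₀) ≤ c := by nlinarith
    linarith
end

section
/- Let l be a real number with 2 < l < 3, and let θ, φ ∈ ℝ satisfy cos θ + cos φ = 2l − 4. Then sin²φ·cos θ + sin²θ·cos φ > 0. -/
open Real

theorem wall_l_negative_curvature
    (l θ φ : ℝ) (hl : 2 < l) (hl' : l < 3)
    (h : cos θ + cos φ = 2 * l - 4) :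
    sin φ ^ 2 * cos θ + sin θ ^ 2 * cos φ > 0 := by
  rw [sin_sq, sin_sq]
  have hs : 0 < cos θ + cos φ := by linarith
  have hs2 : cos θ + cos φ < 2 := by linarith
  have ht : cos θ * cos φ ≤ (cos θ + cos φ) ^ 2 / 4 := by
    nlinarith [sq_nonneg (cos θ - cos φ)]
  nlinarith [mul_pos hs (show 0 < 1 - cos θ * cos φ by nlinarith)]
end

section
/- Let r be a real number with 0 < r < 1, and let θ, φ ∈ ℝ satisfy cos φ − cos θ = 2r. Then sin²φ·cos θ − sin²θ·cos φ < 0. -/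
open Real

theorem wall_r_negative_curvature
    (r θ φ : ℝ) (hr : 0 < r) (hr' : r < 1)
    (h : cos φ - cos θ = 2 * r) :
    sin φ ^ 2 * cos θ - sin θ ^ 2 * cos φ < 0 := by
  have key : 0 < 1 + cos θ * cos φ := by
    have hb : cos φ = cos θ + 2 * r := by linarith
    rw [hb]; nlinarith [sq_nonneg (cos θ + r), mul_pos (by linarith : (0:ℝ) < 1 - r) (by linarith : (0:ℝ) < 1 + r)]
  have e1 : sin θ ^ 2 = 1 - cos θ ^ 2 := by
    have := sin_sq_add_cos_sq θ; linarith
  have e2 : sin φ ^ 2 = 1 - cos φ ^ 2 := by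
    have := sin_sq_add_cos_sq φ; linarith
  rw [e1, e2]
  have : (1 - cos φ ^ 2) * cos θ - (1 - cos θ ^ 2) * cos φ
      = (cos θ - cos φ) * (1 + cos θ * cos φ) := by ring
  rw [this]
  have hlt : cos θ - cos φ < 0 := by linarith
  exact mul_neg_of_neg_of_pos hlt key
end

section
/- Let l, r be real numbers with l > 0 and r > 0, and let θ, φ ∈ ℝ. Then there exist real numbers c, d, e satisfying the configuration equations (−cos θ − 2 − d)² + e² = l², (cos φ + 2 − d)² + e² = l², d² + (c − e)² = r² if and only if |cos θ − cos φ| ≤ 2r and cos θ + cos φ ≤ 2l − 4. -/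
open Real

theorem configuration_projection
    (l r : ℝ) (hl : 0 < l) (hr : 0 < r) (θ φ : ℝ) :
    (∃ c d e : ℝ,
      (-cos θ - 2 - d) ^ 2 + e ^ 2 = l ^ 2 ∧
      (cos φ + 2 - d) ^ 2 + e ^ 2 = l ^ 2 ∧
      d ^ 2 + (c - e) ^ 2 = r ^ 2)
    ↔
    (|cos θ - cos φ| ≤ 2 * r ∧ cos θ + cos φ ≤ 2 * l - 4) := by
  have hx1 := Real.neg_one_le_cos θ
  have hx2 := Real.cos_le_one θ
  have hy1 := Real.neg_one_le_cos φ
  have hy2 := Real.cos_le_one φ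
  set x := Real.cos θ with hx
  set y := Real.cos φ with hy
  constructor
  · rintro ⟨c, d, e, h1, h2, h3⟩
    have hprod : (x + y + 4) * (2 * d - (y - x)) = 0 := by linear_combination h1 - h2
    have hpos : x + y + 4 > 0 := by linarith
    have hd : d = (y - x) / 2 := by
      rcases mul_eq_zero.mp hprod with h | h
      · linarith
      · linarith
    constructor
    · rw [abs_le]
      constructor <;> nlinarith [sq_nonneg (c - e), h3, hd]
    · nlinarith [sq_nonneg e, sq_nonneg (x + y + 4 - 2 * l), h1, hd]
  · rintro ⟨habs, hsum⟩
    rw [abs_le] at habs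
    have h2 : 0 ≤ l ^ 2 - ((x + y + 4) / 2) ^ 2 := by nlinarith
    have h3 : 0 ≤ r ^ 2 - ((y - x) / 2) ^ 2 := by nlinarith [habs.1, habs.2]
    set e := Real.sqrt (l ^ 2 - ((x + y + 4) / 2) ^ 2) with he
    set t := Real.sqrt (r ^ 2 - ((y - x) / 2) ^ 2) with ht
    have hse : e ^ 2 = l ^ 2 - ((x + y + 4) / 2) ^ 2 := Real.sq_sqrt h2
    have hst : t ^ 2 = r ^ 2 - ((y - x) / 2) ^ 2 := Real.sq_sqrt h3
    refine ⟨e + t, (y - x) / 2, e, ?_, ?_, ?_⟩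
    · linear_combination hse
    · linear_combination hse
    · linear_combination hst
end

section
/- Let l, r be real numbers with l + r > 3, l < 3 and 0 < r < 1/2. Then there exist no real numbers θ, φ, d satisfying (−cos θ − 2 − d)² = l², (cos φ + 2 − d)² = l² and d² = r²; i.e., the configuration equations have no solution with e = 0 and c = 0. -/
open Real

theorem no_flat_configuration
    (l r : ℝ) (hlr : l + r > 3) (hl : l < 3) (hr : 0 < r) (hr' : r < 1/2) :
    ¬ ∃ θ φ d : ℝ,
      (-cos θ - 2 - d) ^ 2 = l ^ 2 ∧
      (cos φ + 2 - d) ^ 2 = l ^ 2 ∧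
      d ^ 2 = r ^ 2 := by
  rintro ⟨θ, φ, d, h1, h2, h3⟩
  have hc1 := neg_one_le_cos θ
  have hc2 := cos_le_one θ
  have hc3 := neg_one_le_cos φ
  have hc4 := cos_le_one φ
  have hd : d = r ∨ d = -r := sq_eq_sq_iff_eq_or_eq_neg.mp h3 |>.imp id id
  have hl0 : l > 0 := by linarith
  rcases hd with rfl' | rfl'
  · nlinarith [sq_nonneg (cos φ + 2 - d - l), sq_nonneg (cos φ + 2 - d + l)]
  · nlinarith [sq_nonneg (-cos θ - 2 - d - l), sq_nonneg (-cos θ - 2 - d + l)]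
end

section
/- Let l, r be real numbers with 0 < r < 1 and 1 < l < 3. Suppose θ, φ, c, d, e ∈ ℝ satisfy the configuration equations (−cos θ − 2 − d)² + e² = l², (cos φ + 2 − d)² + e² = l², d² + (c − e)² = r², together with sin θ = 0 and sin φ = 0. Then cos θ = −1, cos φ = −1, e ≠ 0 and c ≠ e. -/
open Real

theorem sin_zero_configuration
    (l r : ℝ) (hr : 0 < r) (hr' : r < 1) (hl : 1 < l) (hl' : l < 3)
    (θ φ c d e : ℝ)
    (h1 : (-cos θ - 2 - d) ^ 2 + e ^ 2 = l ^ 2)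
    (h2 : (cos φ + 2 - d) ^ 2 + e ^ 2 = l ^ 2)
    (h3 : d ^ 2 + (c - e) ^ 2 = r ^ 2)
    (hθ : sin θ = 0) (hφ : sin φ = 0) :
    cos θ = -1 ∧ cos φ = -1 ∧ e ≠ 0 ∧ c ≠ e := by
  have hpθ := sin_sq_add_cos_sq θ
  have hpφ := sin_sq_add_cos_sq φ
  have hcθ : cos θ = 1 ∨ cos θ = -1 := by
    have : (cos θ - 1) * (cos θ + 1) = 0 := by nlinarith
    rcases mul_eq_zero.mp this with h | h
    · left; linarith
    · right; linarith
  have hcφ : cos φ = 1 ∨ cos φ = -1 := by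
    have : (cos φ - 1) * (cos φ + 1) = 0 := by nlinarith
    rcases mul_eq_zero.mp this with h | h
    · left; linarith
    · right; linarith
  have hd2 : d ^ 2 < 1 := by nlinarith [sq_nonneg (c - e)]
  have hθ' : cos θ = -1 := by
    rcases hcθ with h | h
    · exfalso
      rcases hcφ with h' | h' <;> rw [h] at h1 <;> rw [h'] at h2 <;> nlinarith [sq_nonneg d, sq_nonneg e]
    · exact h
  have hφ' : cos φ = -1 := by
    rcases hcφ with h | h
    · exfalso; rw [hθ'] at h1; rw [h] at h2; nlinarith [sq_nonneg d, sq_nonneg e]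
    · exact h
  rw [hθ'] at h1
  rw [hφ'] at h2
  have hd0 : d = 0 := by nlinarith
  refine ⟨hθ', hφ', ?_, ?_⟩
  · intro he
    rw [he] at h1; rw [hd0] at h1
    nlinarith
  · intro hce
    rw [hce] at h3; rw [hd0] at h3
    have hr2 : (0:ℝ) < r ^ 2 := by positivity
    have : (0:ℝ)^2 + (e - e)^2 = 0 := by ring
    linarith
end

section
/- Let l, r be real numbers with 2 < l < 3, 0 < r < 1/2 and (l−2)² + r² < 1. Then for all θ₀, φ₀, v, w ∈ ℝ with (v, w) ≠ (0, 0), there exists t ∈ ℝ such that NOT( |cos(θ₀ + t v) − cos(φ₀ + t w)| ≤ 2r and cos(θ₀ + t v) + cos(φ₀ + t w) ≤ 2l − 4 ). -/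
/-!
Whenever the first angle of a point of the table is `0 mod 2π`, the cosine of the second is at least
`1 - 2r > 0`, and whenever it is `π mod 2π`, that cosine is negative; this already excludes lines
with `v = 0` or `w = 0`. Along a line of slope `w / v`
the first angle passes through `0 mod 2π` at times forming an arithmetic progression, at which the
second angle performs a rotation by `2π w / v`; an orbit of a rotation staying in the open
half-circle `{cos > 0}` forces the rotation to be trivial, so `w / v ∈ ℤ`, and symmetrically
`v / w ∈ ℤ`. Hence the line is parallel to a diagonal `w = ±v`, and there the two constraints give
`|sin δ| ≤ r` and `|cos δ| ≤ l - 2` for the half-difference `δ` of the angles, contradicting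
`(l - 2)² + r² < 1`.
-/

open Real

section round

variable {α : Type*} [Field α] [LinearOrder α] [IsStrictOrderedRing α] [FloorRing α]

theorem round_eq_of_abs_sub_lt_half {x : α} {n : ℤ} (h : |x - n| < 1 / 2) : round x = n := by
  rw [round_eq_iff]
  constructor <;> linarith [abs_lt.1 h]

theorem exists_int_eq_of_forall_abs_sub_lt_quarter [Archimedean α] {a β : α}
    (h : ∀ k : ℕ, ∃ n : ℤ, |a + k * β - n| < 1 / 4) : ∃ m : ℤ, β = m := by
  choose n hn using h
  -- Consecutive nearest integers differ by `round β`, so the error `a + kβ - n k` grows like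
  -- `k (β - round β)`.
  set d := round β
  have hstep : ∀ k, n (k + 1) = n k + d := fun k => by
    have hnear : |β - ((n (k + 1) - n k : ℤ) : α)| < 1 / 2 := by
      have h₁ := abs_lt.1 (hn k)
      have h₂ := abs_lt.1 (hn (k + 1))
      push_cast at h₂ ⊢
      rw [abs_lt]
      constructor <;> linarith
    linarith [round_eq_of_abs_sub_lt_half hnear]
  have hlin : ∀ k : ℕ, n k = n 0 + k * d := fun k => by
    induction k with
    | zero => simp
    | succ k ih => rw [hstep, ih]; push_cast; ring
  have hbound : ∀ k : ℕ, k * |β - d| < 1 / 2 := fun k => by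
    have h₀ := abs_lt.1 (hn 0)
    have hk := abs_lt.1 (hn k)
    rw [hlin k] at hk
    push_cast at h₀ hk
    rw [← Nat.abs_cast, ← abs_mul, abs_lt]
    constructor <;> nlinarith
  refine ⟨d, sub_eq_zero.1 (abs_eq_zero.1 (le_antisymm ?_ (abs_nonneg _)))⟩
  by_contra! hpos
  obtain ⟨k, hk⟩ := exists_nat_gt (1 / |β - d|)
  have := hbound k
  rw [div_lt_iff₀ hpos] at hk
  linarith

end round

theorem Real.exists_int_abs_sub_lt_quarter_of_cos_pos {y : ℝ} (h : 0 < cos (2 * π * y)) :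
    ∃ n : ℤ, |y - n| < 1 / 4 := by
  refine ⟨round y, ?_⟩
  by_contra! hfar
  set u := y - round y
  have hcos : cos (2 * π * y) = cos (2 * π * |u|) :=
    calc cos (2 * π * y) = cos (2 * π * u + round y * (2 * π)) := by congr 1; simp only [u]; ring
      _ = cos |2 * π * u| := by rw [cos_add_int_mul_two_pi, cos_abs]
      _ = cos (2 * π * |u|) := by rw [abs_mul, abs_of_pos two_pi_pos]
  have hu : |u| ≤ 1 / 2 := abs_sub_round y
  have : cos (2 * π * |u|) ≤ 0 := cos_nonpos_of_pi_div_two_le_of_le (by nlinarith [pi_pos])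
    (by nlinarith [pi_pos])
  linarith

theorem exists_int_eq_of_forall_cos_pos {a β : ℝ} (h : ∀ k : ℕ, 0 < cos (2 * π * (a + k * β))) :
    ∃ m : ℤ, β = m :=
  exists_int_eq_of_forall_abs_sub_lt_quarter fun k =>
    Real.exists_int_abs_sub_lt_quarter_of_cos_pos (h k)

theorem eq_or_eq_neg_of_div_eq_intCast {K : Type*} [Field K] [CharZero K] {v w : K}
    (hv : v ≠ 0) (hw : w ≠ 0) {m m' : ℤ} (hm : w / v = m) (hm' : v / w = m') : w = v ∨ w = -v := by
  have hmm : m * m' = 1 := by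
    exact_mod_cast (show (m * m' : K) = 1 by rw [← hm, ← hm']; field_simp)
  rcases Int.eq_one_or_neg_one_of_mul_eq_one hmm with rfl | rfl
  · left; simpa [div_eq_one_iff_eq hv] using hm
  · right; rw [div_eq_iff hv] at hm; simpa using hm

/-- The table `D`, lifted from the torus to `ℝ²`. -/
def linkageTable (l r : ℝ) : Set (ℝ × ℝ) :=
  {p | |cos p.1 - cos p.2| ≤ 2 * r ∧ cos p.1 + cos p.2 ≤ 2 * l - 4}

section linkageTable

variable {l r θ φ : ℝ}

theorem mem_linkageTable_swap : (φ, θ) ∈ linkageTable l r ↔ (θ, φ) ∈ linkageTable l r := by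
  simp only [linkageTable, Set.mem_ofPred_eq, abs_sub_comm (cos φ), add_comm (cos φ)]

theorem mem_linkageTable_neg_right :
    (θ, -φ) ∈ linkageTable l r ↔ (θ, φ) ∈ linkageTable l r := by
  simp only [linkageTable, Set.mem_ofPred_eq, cos_neg]

theorem cos_pos_of_mem_linkageTable (hr : r < 1 / 2) (hp : (θ, φ) ∈ linkageTable l r)
    (hθ : cos θ = 1) : 0 < cos φ := by
  have := abs_le.1 hp.1
  simp only [hθ] at this
  linarith

theorem cos_neg_of_mem_linkageTable (hr : r < 1 / 2) (hp : (θ, φ) ∈ linkageTable l r)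
    (hθ : cos θ = -1) : cos φ < 0 := by
  have := abs_le.1 hp.1
  simp only [hθ] at this
  linarith

theorem not_forall_mem_linkageTable_horizontal (hr : r < 1 / 2) {v : ℝ} (hv : v ≠ 0)
    (θ₀ φ₀ : ℝ) : ¬ ∀ t, (θ₀ + t * v, φ₀) ∈ linkageTable l r := by
  intro h
  have hzero := h (-θ₀ / v)
  have hpi := h ((π - θ₀) / v)
  rw [div_mul_cancel₀ _ hv, add_neg_cancel] at hzero
  rw [div_mul_cancel₀ _ hv, add_sub_cancel] at hpi
  linarith [cos_pos_of_mem_linkageTable hr hzero cos_zero,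
    cos_neg_of_mem_linkageTable hr hpi cos_pi]

theorem not_forall_mem_linkageTable_diagonal (hlr : (l - 2) ^ 2 + r ^ 2 < 1) (θ₀ φ₀ : ℝ) :
    ¬ ∀ s, (θ₀ + s, φ₀ + s) ∈ linkageTable l r := by
  intro h
  set δ := (θ₀ - φ₀) / 2
  have hmid : ∀ c, (c + δ, c - δ) ∈ linkageTable l r := fun c => by
    convert h (c - (θ₀ + φ₀) / 2) using 2 <;> ring
  have hsin : |2 * sin δ| ≤ 2 * r := by
    simpa [cos_add, cos_sub, abs_sub_comm, two_mul] using (hmid (π / 2)).1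
  have hcos₀ : 2 * cos δ ≤ 2 * l - 4 := by simpa [two_mul] using (hmid 0).2
  have hcosπ : -(2 * cos δ) ≤ 2 * l - 4 := by
    simpa [cos_add, cos_sub, two_mul, add_comm] using (hmid π).2
  have hsin_sq : sin δ ^ 2 ≤ r ^ 2 := by
    rw [abs_mul, abs_two] at hsin
    exact sq_le_sq' (by linarith [neg_abs_le (sin δ)]) (by linarith [le_abs_self (sin δ)])
  nlinarith [sin_sq_add_cos_sq δ]

theorem exists_int_div_eq_of_forall_mem_linkageTable (hr : r < 1 / 2) {θ₀ φ₀ v w : ℝ}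
    (hv : v ≠ 0) (h : ∀ t, (θ₀ + t * v, φ₀ + t * w) ∈ linkageTable l r) :
    ∃ m : ℤ, w / v = m := by
  refine exists_int_eq_of_forall_cos_pos (a := (φ₀ - θ₀ * w / v) / (2 * π)) fun k => ?_
  have ht := h ((2 * π * k - θ₀) / v)
  have hθ : θ₀ + (2 * π * k - θ₀) / v * v = k * (2 * π) := by field_simp; ring
  have hφ : φ₀ + (2 * π * k - θ₀) / v * w =
      2 * π * ((φ₀ - θ₀ * w / v) / (2 * π) + k * (w / v)) := by
    field_simp; ring
  rw [hθ, hφ] at ht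
  exact cos_pos_of_mem_linkageTable hr ht (cos_nat_mul_two_pi k)

end linkageTable

theorem finite_horizon_general
    (l r : ℝ) (hr' : r < 1/2)
    (hlr : (l - 2) ^ 2 + r ^ 2 < 1) :
    ∀ θ₀ φ₀ v w : ℝ, (v, w) ≠ (0, 0) →
      ∃ t : ℝ, ¬ (|cos (θ₀ + t * v) - cos (φ₀ + t * w)| ≤ 2 * r ∧
                  cos (θ₀ + t * v) + cos (φ₀ + t * w) ≤ 2 * l - 4) := by
  intro θ₀ φ₀ v w hvw
  by_contra! hline
  change ∀ t, (θ₀ + t * v, φ₀ + t * w) ∈ linkageTable l r at hline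
  have hswap t := mem_linkageTable_swap.2 (hline t)
  rcases eq_or_ne v 0 with rfl | hv
  · refine not_forall_mem_linkageTable_horizontal (l := l) hr' (by simpa using hvw) φ₀ θ₀ ?_
    simpa using hswap
  rcases eq_or_ne w 0 with rfl | hw
  · exact not_forall_mem_linkageTable_horizontal hr' hv θ₀ φ₀ (by simpa using hline)
  obtain ⟨m, hm⟩ := exists_int_div_eq_of_forall_mem_linkageTable hr' hv hline
  obtain ⟨m', hm'⟩ := exists_int_div_eq_of_forall_mem_linkageTable hr' hw hswap
  rcases eq_or_eq_neg_of_div_eq_intCast hv hw hm hm' with hwv | hwv <;> rw [hwv] at hline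
  · exact not_forall_mem_linkageTable_diagonal hlr θ₀ φ₀ fun s => by
      simpa [div_mul_cancel₀ _ hv] using hline (s / v)
  · refine not_forall_mem_linkageTable_diagonal hlr θ₀ (-φ₀) fun s => ?_
    have hs := hline (s / v)
    rw [div_mul_cancel₀ _ hv, mul_neg, div_mul_cancel₀ _ hv, ← mem_linkageTable_neg_right] at hs
    convert hs using 2
    ring

theorem finite_horizon
    (l r : ℝ) (hl : 2 < l) (hl' : l < 3) (hr : 0 < r) (hr' : r < 1/2)
    (hlr : (l - 2) ^ 2 + r ^ 2 < 1) :
    ∀ θ₀ φ₀ v w : ℝ, (v, w) ≠ (0, 0) →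
      ∃ t : ℝ, ¬ (|cos (θ₀ + t * v) - cos (φ₀ + t * w)| ≤ 2 * r ∧
                  cos (θ₀ + t * v) + cos (φ₀ + t * w) ≤ 2 * l - 4) :=
  finite_horizon_general l r hr' hlr
end

section
/- Let r be a real number with 0 < r < 1/2, let s ∈ ℝ with |s| ≤ 1, and let θ₀, φ₀ ∈ ℝ. If |cos(θ₀ + t) − cos(φ₀ + s t)| ≤ 2r for all t ∈ ℝ, then s = 1 or s = −1. -/
open Real

theorem slope_is_pm_one
    (r : ℝ) (hr : 0 < r) (hr' : r < 1/2)
    (s : ℝ) (hs : |s| ≤ 1) (θ₀ φ₀ : ℝ)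
    (h : ∀ t : ℝ, |cos (θ₀ + t) - cos (φ₀ + s * t)| ≤ 2 * r) :
    s = 1 ∨ s = -1 := by
  by_contra hcon
  push_neg at hcon
  set α : ℝ := φ₀ + s * (π - θ₀) with hα
  -- key: at times where θ₀ + t ≡ π, cos of the φ-coordinate is ≤ 2r - 1
  have key : ∀ m : ℤ, cos (α + m • (2 * π * s)) ≤ 2 * r - 1 := by
    intro m
    have ht := h ((π - θ₀) + 2 * π * m)
    have h1 : θ₀ + ((π - θ₀) + 2 * π * m) = π + m * (2 * π) := by ring
    have h2 : φ₀ + s * ((π - θ₀) + 2 * π * m) = α + m * (2 * π * s) := by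
      rw [hα]; ring
    rw [h1, h2, cos_add_int_mul_two_pi, cos_pi] at ht
    have := (abs_le.mp ht).1
    simp only [zsmul_eq_mul]
    linarith
  -- the relevant subgroup of ℝ
  set G : AddSubgroup ℝ := AddSubgroup.closure {2 * π, 2 * π * s} with hG
  have keyG : ∀ g ∈ G, cos (α + g) ≤ 2 * r - 1 := by
    intro g hg
    rw [hG, AddSubgroup.mem_closure_pair] at hg
    obtain ⟨n, m, hnm⟩ := hg
    have : α + g = (α + m • (2 * π * s)) + n * (2 * π) := by
      rw [← hnm]; push_cast [zsmul_eq_mul]; ring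
    rw [this, cos_add_int_mul_two_pi]
    exact key m
  have hπ : (0:ℝ) < π := pi_pos
  have h2r1 : 2 * r - 1 < 0 := by linarith
  -- helper: no element g of G can have α + g in [-π/2, π/2]
  have noG : ∀ g ∈ G, ¬ (α + g ∈ Set.Icc (-(π/2)) (π/2)) := by
    intro g hg hmem
    have := cos_nonneg_of_mem_Icc hmem
    linarith [keyG g hg]
  -- helper: if b > 0 is ≤ π and all multiples of b are in G, contradiction
  have small : ∀ b : ℝ, 0 < b → b ≤ π → (∀ m : ℤ, (m : ℝ) * b ∈ G) → False := by
    intro b hb hbπ hmul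
    set m : ℤ := ⌈(-(π/2) - α) / b⌉ with hm
    refine noG ((m:ℝ) * b) (hmul m) ?_
    constructor
    · have h1 : (-(π/2) - α) / b ≤ m := Int.le_ceil _
      have := (div_le_iff₀ hb).mp h1
      linarith
    · have h1 : (m : ℝ) < (-(π/2) - α) / b + 1 := Int.ceil_lt_add_one _
      have := (lt_div_iff₀ hb).mp (by linarith : (m:ℝ) - 1 < (-(π/2) - α) / b)
      nlinarith
  have h2πG : (2 * π) ∈ G := AddSubgroup.subset_closure (by simp)
  have h2πsG : (2 * π * s) ∈ G := AddSubgroup.subset_closure (by simp)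
  rcases G.dense_or_cyclic with hd | ⟨a, ha⟩
  · -- dense case: find g ∈ G close to -α
    obtain ⟨g, hgG, hgd⟩ := Metric.mem_closure_iff.mp (hd (-α)) (π/2) (by linarith)
    rw [Real.dist_eq] at hgd
    obtain ⟨h1, h2⟩ := abs_lt.mp hgd
    exact noG g hgG ⟨by linarith, by linarith⟩
  · -- cyclic case
    have h2π : (2*π) ∈ AddSubgroup.closure ({a} : Set ℝ) := ha ▸ h2πG
    have h2πs : (2*π*s) ∈ AddSubgroup.closure ({a} : Set ℝ) := ha ▸ h2πsG
    rw [AddSubgroup.mem_closure_singleton] at h2π h2πs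
    obtain ⟨k, hk⟩ := h2π
    obtain ⟨l, hl⟩ := h2πs
    have ha0 : a ≠ 0 := by
      rintro rfl; simp at hk
    have hk0 : k ≠ 0 := by
      rintro rfl; simp at hk
    have hmulG : ∀ m : ℤ, (m : ℝ) * |a| ∈ G := by
      intro m
      rcases abs_cases a with ⟨he, _⟩ | ⟨he, _⟩
      · rw [he]
        have : (m : ℝ) * a = m • a := by simp
        rw [this, ha]
        exact AddSubgroup.zsmul_mem _ (AddSubgroup.mem_closure_singleton.mpr ⟨1, one_zsmul a⟩) m
      · rw [he]
        have : (m : ℝ) * -a = (-m) • a := by push_cast [zsmul_eq_mul]; ring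
        rw [this, ha]
        exact AddSubgroup.zsmul_mem _ (AddSubgroup.mem_closure_singleton.mpr ⟨1, one_zsmul a⟩) (-m)
    have habs : 0 < |a| := abs_pos.mpr ha0
    by_cases hap : |a| ≤ π
    · exact small |a| habs hap hmulG
    · -- |a| > π forces |k| = 1, so s is an integer
      push_neg at hap
      have hka : |(k:ℝ)| * |a| = 2*π := by
        rw [← abs_mul]
        have : (k:ℝ) * a = 2*π := by rw [← hk]; simp [zsmul_eq_mul]
        rw [this, abs_of_pos (by linarith)]
      have hk1 : |(k:ℝ)| = 1 := by
        have hk1' : 1 ≤ |(k:ℝ)| := by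
          have : (1:ℝ) ≤ |(k:ℤ)| := by exact_mod_cast Int.one_le_abs hk0
          simpa using this
        by_contra hne
        have : 2 ≤ |(k:ℝ)| := by
          have : 1 < |(k:ℤ)| := by
            rcases lt_or_eq_of_le (Int.one_le_abs hk0) with hh | hh
            · exact hh
            · exfalso; apply hne; rw [← Int.cast_abs, ← hh]; norm_num
          have : 2 ≤ |(k:ℤ)| := this
          exact_mod_cast this
        nlinarith
      -- so a = ±2π, and 2πs = l • a means s = ±l is an integer
      have haval : |a| = 2*π := by nlinarith [abs_nonneg a]
      have hsint : ∃ j : ℤ, s = j := by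
        have hla : (l:ℝ) * a = 2*π*s := by rw [← hl]; simp [zsmul_eq_mul]
        rcases abs_cases a with ⟨he, _⟩ | ⟨he, _⟩
        · refine ⟨l, ?_⟩
          have haa : a = 2*π := by rw [he] at haval; exact haval
          have h2 : (2*π) * (l:ℝ) = (2*π) * s := by rw [haa] at hla; linarith
          have := mul_left_cancel₀ (by positivity : (2*π:ℝ) ≠ 0) h2
          linarith
        · refine ⟨-l, ?_⟩
          have haa : a = -(2*π) := by rw [he] at haval; linarith
          have h2 : (2*π) * ((-l : ℤ) : ℝ) = (2*π) * s := by
            rw [haa] at hla; push_cast; linarith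
          have := mul_left_cancel₀ (by positivity : (2*π:ℝ) ≠ 0) h2
          push_cast at this ⊢
          linarith
      obtain ⟨j, hj⟩ := hsint
      -- |s| ≤ 1, s ≠ ±1, so s = 0
      have hs0 : s = 0 := by
        rw [hj] at hs hcon ⊢
        have hjr := abs_le.mp hs
        have hj1 : -1 ≤ j := by exact_mod_cast hjr.1
        have hj2 : j ≤ 1 := by exact_mod_cast hjr.2
        interval_cases j <;> simp_all
      -- s = 0: contradiction between t = -θ₀ and key
      have h0 := h (-θ₀)
      rw [hs0] at h0
      simp at h0
      have hc1 : cos φ₀ ≥ 1 - 2*r := by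
        have := (abs_le.mp h0).2
        linarith
      have hc2 : cos (α + (0:ℤ) • (2 * π * s)) ≤ 2*r - 1 := key 0
      rw [hs0] at hc2
      simp [hα, hs0] at hc2
      linarith
end

section
/- Let l, r be real numbers with r > 0 and l ≥ 2, and let θ₀, φ₀ ∈ ℝ. If for all t ∈ ℝ one has |cos(θ₀ + t) − cos(φ₀ + t)| ≤ 2r and cos(θ₀ + t) + cos(φ₀ + t) ≤ 2l − 4, then r² + (l − 2)² ≥ 1. -/
open Real

theorem slope_one_line_forces_inequality
    (l r : ℝ) (hr : 0 < r) (hl : 2 ≤ l) (θ₀ φ₀ : ℝ)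
    (h : ∀ t : ℝ, |cos (θ₀ + t) - cos (φ₀ + t)| ≤ 2 * r ∧
                  cos (θ₀ + t) + cos (φ₀ + t) ≤ 2 * l - 4) :
    r ^ 2 + (l - 2) ^ 2 ≥ 1 := by
  set s : ℝ := (θ₀ + φ₀) / 2
  set α : ℝ := (θ₀ - φ₀) / 2
  have h1 := (h (π / 2 - s)).1
  have h2 := (h (-s)).2
  have h3 := (h (π - s)).2
  have e1 : θ₀ + (π / 2 - s) = π / 2 + α := by simp [s, α]; ring
  have e2 : φ₀ + (π / 2 - s) = π / 2 - α := by simp [s, α]; ring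
  have e3 : θ₀ + -s = α := by simp [s, α]; ring
  have e4 : φ₀ + -s = -α := by simp [s, α]; ring
  have e5 : θ₀ + (π - s) = π + α := by simp [s, α]; ring
  have e6 : φ₀ + (π - s) = π - α := by simp [s, α]; ring
  rw [e1, e2] at h1; rw [e3, e4] at h2; rw [e5, e6] at h3
  simp [Real.cos_add, Real.cos_sub, Real.cos_neg] at h1 h2 h3
  have hsin : |sin α| ≤ r := by
    have : |-sin α - sin α| = 2 * |sin α| := by
      rw [show -sin α - sin α = -(2 * sin α) by ring, abs_neg, abs_mul]
      simp
    rw [this] at h1; linarith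
  have hcos : |cos α| ≤ l - 2 := by
    rw [abs_le]; constructor <;> linarith
  have hs2 : sin α ^ 2 ≤ r ^ 2 := by
    have := sq_abs (sin α); nlinarith [abs_nonneg (sin α)]
  have hc2 : cos α ^ 2 ≤ (l - 2) ^ 2 := by
    have := sq_abs (cos α); nlinarith [abs_nonneg (cos α)]
  nlinarith [sin_sq_add_cos_sq α]
end

section
/- Let s, x ∈ ℝ. If cos(x + 2πks) > 0 for every integer k ∈ ℤ, then s ∈ ℤ. -/
open Real

theorem coset_in_arc_forces_integer
    (s x : ℝ) (h : ∀ k : ℤ, 0 < cos (x + 2 * π * k * s)) :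
    ∃ n : ℤ, s = (n : ℝ) := by
  -- Step 1: reduce to x = 0 : cos (2πks) > 0 for all k.
  have key : ∀ k : ℤ, 0 < cos (2 * π * k * s) := by
    intro k
    have h0 := h 0
    have hk := h k
    have h2k := h (2 * k)
    simp only [Int.cast_zero, Int.cast_mul, Int.cast_ofNat, Int.cast_two] at h0 hk h2k
    have hx0 : x + 2 * π * (0:ℝ) * s = x := by ring
    have hsum : cos x + cos (x + 2 * π * (2 * k) * s)
        = 2 * cos (x + 2 * π * k * s) * cos (2 * π * k * s) := by
      rw [Real.cos_add_cos]
      have e1 : (x + (x + 2 * π * (2 * (k:ℝ)) * s)) / 2 = x + 2 * π * k * s := by ring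
      have e2 : (x - (x + 2 * π * (2 * (k:ℝ)) * s)) / 2 = -(2 * π * k * s) := by ring
      rw [e1, e2, Real.cos_neg]
    rw [hx0] at h0
    have hL : 0 < 2 * cos (x + 2 * π * k * s) * cos (2 * π * k * s) := by
      rw [← hsum]; positivity
    have h2 : 0 < 2 * cos (x + 2 * π * k * s) := by positivity
    nlinarith [hL, h2]
  -- Step 2: let α = 2π (s - round s), then |α| < π/2.
  set m : ℤ := round s with hm
  set α : ℝ := 2 * π * (s - m) with hα
  have hπ := Real.pi_pos
  have keyα : ∀ k : ℤ, 0 < cos (k * α) := by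
    intro k
    have e : (k:ℝ) * α = 2 * π * k * s + (-(k * m) : ℤ) * (2 * π) := by
      push_cast; ring
    rw [e, Real.cos_add_int_mul_two_pi (2 * π * k * s) (-(k*m))]
    exact key k
  -- Step 3: |α| < π/2 since α ∈ (-π, π] and cos α > 0.
  have hαbound : |s - m| ≤ 1 / 2 := (abs_sub_round s)
  have hαpi : |α| ≤ π := by
    rw [hα, abs_mul, abs_of_pos (by positivity : (0:ℝ) < 2 * π)]
    calc 2 * π * |s - m| ≤ 2 * π * (1/2) := by
          exact mul_le_mul_of_nonneg_left hαbound (by positivity)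
      _ = π := by ring
  have hcosα : 0 < cos α := by
    have := keyα 1; simpa using this
  have habs : |α| < π / 2 := by
    by_contra hc
    push_neg at hc
    have h1 : 0 < cos |α| := by
      rcases abs_cases α with ⟨he, _⟩ | ⟨he, _⟩
      · rw [he]; exact hcosα
      · rw [he, Real.cos_neg]; exact hcosα
    have h2 : cos |α| ≤ 0 := Real.cos_nonpos_of_pi_div_two_le_of_le hc
      (by linarith)
    linarith
  -- Step 4: if α ≠ 0 derive contradiction; hence α = 0 and s = m.
  rcases eq_or_ne α 0 with hz | hz
  · refine ⟨m, ?_⟩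
    have : 2 * π * (s - m) = 0 := hz
    have h2π : (2:ℝ) * π ≠ 0 := by positivity
    have := mul_eq_zero.mp this
    rcases this with h' | h'
    · exact absurd h' h2π
    · linarith
  · exfalso
    set a : ℝ := |α| with ha
    have ha0 : 0 < a := abs_pos.mpr hz
    -- choose the smallest natural k with k * a ≥ π/2
    obtain ⟨k, hk⟩ := Archimedean.arch (π / 2) ha0
    -- take the minimal such k
    have hex : ∃ n : ℕ, π / 2 ≤ n * a := ⟨k, by simpa [nsmul_eq_mul] using hk⟩
    classical
    set n := Nat.find hex with hn
    have hn1 : π / 2 ≤ n * a := Nat.find_spec hex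
    have hn0 : n ≠ 0 := by
      intro h0
      rw [h0] at hn1; push_cast at hn1; linarith
    have hprev : ¬ π / 2 ≤ (n - 1 : ℕ) * a :=
      Nat.find_min hex (Nat.sub_lt (Nat.pos_of_ne_zero hn0) one_pos)
    push_neg at hprev
    have hcast : ((n - 1 : ℕ) : ℝ) = (n : ℝ) - 1 := by
      have : 1 ≤ n := Nat.one_le_iff_ne_zero.mpr hn0
      push_cast [Nat.cast_sub this]; ring
    rw [hcast] at hprev
    have hupper : (n : ℝ) * a < π / 2 + a := by nlinarith
    have hcosna : cos ((n:ℝ) * a) ≤ 0 :=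
      Real.cos_nonpos_of_pi_div_two_le_of_le hn1 (by linarith)
    -- but cos (n * a) > 0 from keyα
    have hpos : 0 < cos ((n:ℝ) * a) := by
      rcases abs_cases α with ⟨he, _⟩ | ⟨he, _⟩
      · have := keyα (n : ℤ); rw [ha, he]; simpa using this
      · have := keyα (-(n : ℤ))
        rw [ha, he]
        have e : ((-(n:ℤ) : ℤ) : ℝ) * α = (n : ℝ) * (-α) := by push_cast; ring
        rw [e] at this; exact this
    linarith
end

section
/- Let l, r be real numbers with 2 < l < 3, 0 < r < 1/2 and (l−2)² + r² < 1. Then there exists T > 0 such that for all θ₀, φ₀, v, w ∈ ℝ with v² + w² = 1, there exists t ∈ [0, T] such that NOT( |cos(θ₀ + t v) − cos(φ₀ + t w)| ≤ 2r and cos(θ₀ + t v) + cos(φ₀ + t w) ≤ 2l − 4 ). -/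
/-!
In the coordinates `x = (θ + φ) / 2`, `y = (θ - φ) / 2` the table becomes
`|sin x sin y| ≤ r`, `cos x cos y ≤ a` with `a = l - 2`, and its symmetries reduce every
line to one of the form `y = c + κ (x - x₀)` with `0 ≤ κ ≤ 1`. Where `cos x = 0` the line
must have `|sin y| ≤ r < 1/2`, i.e. `y` within `π/6` of `πℤ`; these places are spaced `π`
apart, so after `J` of them `κ` is within `1/(3J)` of `0` or of `1`. If `κ ≈ 0`, `y` is almost
constant with `|cos y| ≥ √(1 - r²) > a`, and the next `x` with `cos x = ± 1` of the right sign
gives `cos x cos y > a`. If `κ ≈ 1`, `x - y` is almost constant, and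
`2 sin x sin y = cos (x - y) - cos (x + y)` exceeds `2r` in absolute value at the next point
where `cos (x + y) = ± 1` has the sign opposite to `cos (x - y)`. Choosing `J` large against
both margins gives a uniform time.
-/

open Real Set

lemma exists_abs_sub_int_mul_pi_le_of_abs_sin_le {m z : ℝ} (hm₀ : 0 ≤ m) (hm : m ≤ π / 2)
    (h : |sin z| ≤ sin m) : ∃ n : ℤ, |z - n * π| ≤ m := by
  refine ⟨round (z / π), ?_⟩
  have he : |z - round (z / π) * π| ≤ π / 2 := by
    have hround := abs_sub_round (z / π)
    rw [show z - round (z / π) * π = π * (z / π - round (z / π)) by field_simp,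
      abs_mul, abs_of_pos pi_pos]
    nlinarith [pi_pos]
  have hsin : sin |z - round (z / π) * π| = |sin z| := by
    rw [← abs_sin_eq_sin_abs_of_abs_le_pi (by linarith [pi_pos]), sin_sub_int_mul_pi,
      abs_mul, abs_neg_one_zpow, one_mul]
  by_contra! hlt
  have := sin_lt_sin_of_lt_of_le_pi_div_two (by linarith [pi_pos]) he hlt
  linarith

lemma int_eq_of_abs_sub_mul_lt {p : ℝ} {n n' : ℤ} (hp : 0 < p) (h : |(n - n' : ℝ) * p| < p) :
    n = n' := by
  rw [abs_mul, abs_of_pos hp, mul_lt_iff_lt_one_left hp] at h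
  exact sub_eq_zero.1 (Int.abs_lt_one_iff.1 (by exact_mod_cast h))

/-- Consecutive points are too close for their nearest multiple of `p` to change. -/
lemma nat_mul_abs_le_of_forall_near_zmultiples {p m δ c : ℝ} {J : ℕ} (hδ : 2 * m + |δ| < p)
    (h : ∀ j ≤ J, ∃ n : ℤ, |c + j * δ - n * p| ≤ m) : J * |δ| ≤ 2 * m := by
  obtain ⟨n₀, hn₀⟩ := h 0 J.zero_le
  have hp : 0 < p := by linarith [(abs_nonneg _).trans hn₀, abs_nonneg δ]
  have hstay : ∀ j ≤ J, |c + j * δ - n₀ * p| ≤ m := by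
    intro j
    induction j with
    | zero => simpa using hn₀
    | succ j ih =>
      intro hj
      obtain ⟨n, hn⟩ := h (j + 1) hj
      have hjm := ih (by omega)
      suffices n = n₀ by rwa [this] at hn
      apply int_eq_of_abs_sub_mul_lt hp
      calc |(n - n₀ : ℝ) * p|
          = |(c + j * δ - n₀ * p) + δ - (c + (j + 1 : ℕ) * δ - n * p)| := by
            push_cast; ring_nf
        _ ≤ |c + j * δ - n₀ * p| + |δ| + |c + (j + 1 : ℕ) * δ - n * p| :=
            (abs_sub _ _).trans (by gcongr; exact abs_add_le _ _)
        _ < p := by linarith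
  calc J * |δ| = |J * δ| := by rw [abs_mul, Nat.abs_cast]
    _ = |(c + J * δ - n₀ * p) - (c + (0 : ℕ) * δ - n₀ * p)| := by push_cast; ring_nf
    _ ≤ |c + J * δ - n₀ * p| + |c + (0 : ℕ) * δ - n₀ * p| := abs_sub _ _
    _ ≤ 2 * m := by linarith [hstay J le_rfl, hstay 0 J.zero_le]

lemma exists_nat_mul_abs_sub_int_mul_le {p m δ c : ℝ} {J : ℕ} (hm : 4 * m < p)
    (h : ∀ j ≤ J, ∃ n : ℤ, |c + j * δ - n * p| ≤ m) :
    ∃ n : ℤ, J * |δ - n * p| ≤ 2 * m := by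
  obtain ⟨n₀, hn₀⟩ := h 0 J.zero_le
  have hp : 0 < p := by linarith [(abs_nonneg _).trans hn₀]
  refine ⟨round (δ / p),
    nat_mul_abs_le_of_forall_near_zmultiples (p := p) (c := c) ?_ fun j hj => ?_⟩
  · have hround := abs_sub_round (δ / p)
    rw [show δ - round (δ / p) * p = p * (δ / p - round (δ / p)) by field_simp,
      abs_mul, abs_of_pos hp]
    nlinarith
  · obtain ⟨n, hn⟩ := h j hj
    exact ⟨n - j * round (δ / p), by push_cast; convert hn using 2; ring⟩

/-- The billiard table in the coordinates `x = (θ + φ) / 2`, `y = (θ - φ) / 2`,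
with `a = l - 2`. -/
def rotatedTable (a r : ℝ) : Set (ℝ × ℝ) :=
  {p | |sin p.1 * sin p.2| ≤ r ∧ cos p.1 * cos p.2 ≤ a}

section rotatedTable

variable {a r x y : ℝ}

lemma mem_rotatedTable_swap : (y, x) ∈ rotatedTable a r ↔ (x, y) ∈ rotatedTable a r := by
  simp only [rotatedTable, mem_ofPred_eq, mul_comm]

lemma mem_rotatedTable_neg_left : (-x, y) ∈ rotatedTable a r ↔ (x, y) ∈ rotatedTable a r := by
  simp only [rotatedTable, mem_ofPred_eq, sin_neg, cos_neg, neg_mul, abs_neg]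

lemma mem_rotatedTable_neg_right :
    (x, -y) ∈ rotatedTable a r ↔ (x, y) ∈ rotatedTable a r := by
  simp only [rotatedTable, mem_ofPred_eq, sin_neg, cos_neg, mul_neg, abs_neg]

lemma half_add_half_sub_mem_rotatedTable_iff {θ φ : ℝ} :
    ((θ + φ) / 2, (θ - φ) / 2) ∈ rotatedTable a r ↔
      |cos θ - cos φ| ≤ 2 * r ∧ cos θ + cos φ ≤ 2 * a := by
  have hsub : |cos θ - cos φ| = 2 * |sin ((θ + φ) / 2) * sin ((θ - φ) / 2)| := by
    rw [cos_sub_cos, mul_assoc, abs_mul, abs_neg, abs_two]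
  have hadd : cos θ + cos φ = 2 * (cos ((θ + φ) / 2) * cos ((θ - φ) / 2)) := by
    rw [cos_add_cos, mul_assoc]
  simp only [rotatedTable, mem_ofPred_eq, hsub, hadd]
  constructor <;> rintro ⟨h₁, h₂⟩ <;> constructor <;> linarith

lemma abs_sin_le_of_mem_rotatedTable (hx : cos x = 0) (h : (x, y) ∈ rotatedTable a r) :
    |sin y| ≤ r := by
  have : |sin x| = 1 := by
    rw [abs_sin_eq_sqrt_one_sub_cos_sq, hx]; norm_num
  simpa [abs_mul, this] using h.1

end rotatedTable

lemma exists_mem_Icc_cos_eq {σ : ℝ} (h₁ : -1 ≤ σ) (h₂ : σ ≤ 1) (u₀ : ℝ) :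
    ∃ u ∈ Icc u₀ (u₀ + 2 * π), cos u = σ := by
  obtain ⟨u, hu, hcos⟩ := cos_periodic.exists_mem_Ico two_pi_pos (arccos σ) u₀
  exact ⟨u, Ico_subset_Icc_self hu, hcos ▸ cos_arccos h₁ h₂⟩

lemma exists_mem_Icc_cos_mul_eq_abs (b u₀ : ℝ) :
    ∃ u ∈ Icc u₀ (u₀ + 2 * π), |cos u| = 1 ∧ cos u * b = |b| := by
  rcases le_total 0 b with hb | hb
  · obtain ⟨u, hu, hcos⟩ := exists_mem_Icc_cos_eq (σ := 1) (by norm_num) le_rfl u₀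
    exact ⟨u, hu, by simp [hcos, abs_of_nonneg hb]⟩
  · obtain ⟨u, hu, hcos⟩ := exists_mem_Icc_cos_eq (σ := -1) le_rfl (by norm_num) u₀
    exact ⟨u, hu, by simp [hcos, abs_of_nonpos hb]⟩

lemma exists_cos_mul_cos_gt {a κ c x₁ : ℝ} (hκ : 0 ≤ κ) (h : a + 2 * π * κ < |cos c|) :
    ∃ x ∈ Icc x₁ (x₁ + 2 * π), a < cos x * cos (c + κ * (x - x₁)) := by
  obtain ⟨x, hx, -, hxc⟩ := exists_mem_Icc_cos_mul_eq_abs (cos c) x₁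
  refine ⟨x, hx, ?_⟩
  have hdrift : |cos x * (cos (c + κ * (x - x₁)) - cos c)| ≤ 2 * π * κ :=
    calc |cos x * (cos (c + κ * (x - x₁)) - cos c)|
        ≤ |cos (c + κ * (x - x₁)) - cos c| := by
          rw [abs_mul]; exact mul_le_of_le_one_left (abs_nonneg _) (abs_cos_le_one x)
      _ ≤ |κ * (x - x₁)| := by simpa using abs_cos_sub_cos_le (c + κ * (x - x₁)) c
      _ ≤ 2 * π * κ := by
          rw [abs_of_nonneg (mul_nonneg hκ (by linarith [hx.1]))]; nlinarith [hx.2]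
  have hsplit : cos x * (cos (c + κ * (x - x₁)) - cos c) =
      cos x * cos (c + κ * (x - x₁)) - |cos c| := by rw [mul_sub, hxc]
  linarith [neg_abs_le (cos x * (cos (c + κ * (x - x₁)) - cos c))]

lemma exists_abs_sin_mul_sin_gt {r κ c x₁ : ℝ} (hκ₀ : 0 ≤ κ) (hκ₁ : κ ≤ 1)
    (h : 2 * r + 2 * π * (1 - κ) < 1) :
    ∃ x ∈ Icc x₁ (x₁ + 2 * π), r < |sin x * sin (c + κ * (x - x₁))| := by
  obtain ⟨s, hs, hs_abs, hs_mul⟩ := exists_mem_Icc_cos_mul_eq_abs (-cos (x₁ - c)) (x₁ + c)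
  set x := x₁ + (s - (x₁ + c)) / (1 + κ) with hx_def
  have hx : x ∈ Icc x₁ (x₁ + 2 * π) := by
    have h₀ : 0 ≤ (s - (x₁ + c)) / (1 + κ) := div_nonneg (by linarith [hs.1]) (by linarith)
    have h₁ : (s - (x₁ + c)) / (1 + κ) ≤ s - (x₁ + c) :=
      div_le_self (by linarith [hs.1]) (by linarith)
    exact ⟨by linarith, by linarith [hs.2]⟩
  refine ⟨x, hx, ?_⟩
  set y := c + κ * (x - x₁) with hy_def
  have hsum : x + y = s := by
    rw [hy_def, hx_def]; field_simp; ring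
  clear_value x y
  have hprod : 2 * (sin x * sin y) = cos (x - y) - cos s := by
    rw [← hsum, cos_sub, cos_add]; ring
  have hdrift : |cos s * (cos (x - y) - cos (x₁ - c))| ≤ 2 * π * (1 - κ) :=
    calc |cos s * (cos (x - y) - cos (x₁ - c))|
        ≤ |cos (x - y) - cos (x₁ - c)| := by
          rw [abs_mul]; exact mul_le_of_le_one_left (abs_nonneg _) (abs_cos_le_one s)
      _ ≤ |(1 - κ) * (x - x₁)| := by
          convert abs_cos_sub_cos_le (x - y) (x₁ - c) using 2; rw [hy_def]; ring
      _ ≤ 2 * π * (1 - κ) := by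
          rw [abs_of_nonneg (mul_nonneg (by linarith) (by linarith [hx.1]))]
          nlinarith [hx.2]
  have hcomb : cos s * (2 * (sin x * sin y)) ≤ -1 + 2 * π * (1 - κ) := by
    have hsq : cos s * cos s = 1 := by rw [← abs_mul_abs_self, hs_abs, one_mul]
    have hsplit : cos s * (2 * (sin x * sin y)) =
        cos s * (cos (x - y) - cos (x₁ - c)) - |-cos (x₁ - c)| - 1 := by
      rw [hprod, ← hs_mul, ← hsq]; ring
    linarith [le_abs_self (cos s * (cos (x - y) - cos (x₁ - c))), abs_nonneg (-cos (x₁ - c))]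
  have := neg_abs_le (cos s * (2 * (sin x * sin y)))
  rw [abs_mul, abs_mul, hs_abs, abs_two] at this
  linarith

lemma exists_int_nat_mul_abs_sub_le_of_forall_mem_rotatedTable {a r κ c x₁ : ℝ} {J : ℕ}
    (hr : r < 1 / 2) (hx₁ : cos x₁ = 0)
    (hin : ∀ x ∈ Icc x₁ (x₁ + J * π), (x, c + κ * (x - x₁)) ∈ rotatedTable a r) :
    ∃ n : ℤ, J * |κ - n| ≤ 1 / 3 := by
  have hgrid : ∀ j ≤ J, ∃ n : ℤ, |c + j * (κ * π) - n * π| ≤ π / 6 := by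
    intro j hj
    refine exists_abs_sub_int_mul_pi_le_of_abs_sin_le (by positivity) (by linarith [pi_pos]) ?_
    have hj' : (j : ℝ) ≤ J := by exact_mod_cast hj
    have hcos : cos (x₁ + j * π) = 0 := by rw [cos_add_nat_mul_pi, hx₁, mul_zero]
    have hsin := abs_sin_le_of_mem_rotatedTable hcos
      (hin _ ⟨by nlinarith [pi_pos], by nlinarith [pi_pos]⟩)
    calc |sin (c + j * (κ * π))| = |sin (c + κ * (x₁ + j * π - x₁))| := by ring_nf
      _ ≤ sin (π / 6) := by rw [sin_pi_div_six]; linarith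
  obtain ⟨n, hn⟩ :=
    exists_nat_mul_abs_sub_int_mul_le (by linarith [pi_pos] : 4 * (π / 6) < π) hgrid
  refine ⟨n, ?_⟩
  rw [← sub_mul, abs_mul, abs_of_pos pi_pos] at hn
  nlinarith [pi_pos]

lemma exists_notMem_rotatedTable_of_cos_eq_zero {a r : ℝ} (hr : r < 1 / 2)
    (hra : a ^ 2 + r ^ 2 < 1) :
    ∃ J : ℕ, ∀ κ x₁ c : ℝ, 0 ≤ κ → κ ≤ 1 → cos x₁ = 0 →
      ∃ x ∈ Icc x₁ (x₁ + (J + 2) * π), (x, c + κ * (x - x₁)) ∉ rotatedTable a r := by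
  set ε := min (√(1 - r ^ 2) - a) (1 - 2 * r)
  have hε : 0 < ε := lt_min (sub_pos.2 (lt_sqrt_of_sq_lt (by linarith))) (by linarith)
  obtain ⟨J, hJε⟩ : ∃ J : ℕ, π < J * ε :=
    (exists_nat_gt (π / ε)).imp fun _ hJ => (div_lt_iff₀ hε).1 hJ
  have hJ : 0 < (J : ℝ) := pos_of_mul_pos_left (pi_pos.trans hJε) hε.le
  refine ⟨J, fun κ x₁ c hκ₀ hκ₁ hx₁ => ?_⟩
  by_contra! hin
  obtain ⟨n, hn⟩ := exists_int_nat_mul_abs_sub_le_of_forall_mem_rotatedTable hr hx₁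
    fun x hx => hin x ⟨hx.1, by linarith [hx.2, pi_pos]⟩
  have hIcc : Icc x₁ (x₁ + 2 * π) ⊆ Icc x₁ (x₁ + (J + 2) * π) :=
    Icc_subset_Icc_right (by nlinarith [pi_pos])
  rcases le_or_gt n 0 with hn0 | hn1
  · have hκ : J * κ ≤ 1 / 3 := hn.trans' (by gcongr; exact le_abs.2 (Or.inl (by
      have : (n : ℝ) ≤ 0 := by exact_mod_cast hn0
      linarith)))
    have hdrift : 2 * π * κ < ε :=
      lt_of_mul_lt_mul_left (a := (J : ℝ)) (by nlinarith [pi_pos]) hJ.le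
    have hsin : |sin c| ≤ r := by
      simpa using
        abs_sin_le_of_mem_rotatedTable hx₁ (hin x₁ ⟨le_rfl, by nlinarith [pi_pos]⟩)
    have hcos : √(1 - r ^ 2) ≤ |cos c| := by
      rw [abs_cos_eq_sqrt_one_sub_sin_sq]
      exact sqrt_le_sqrt (by linarith [sq_le_sq' (abs_le.1 hsin).1 (abs_le.1 hsin).2])
    obtain ⟨x, hx, hgt⟩ := exists_cos_mul_cos_gt (x₁ := x₁) hκ₀
      (by linarith [min_le_left (√(1 - r ^ 2) - a) (1 - 2 * r)] : a + 2 * π * κ < |cos c|)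
    exact not_lt.2 (hin x (hIcc hx)).2 hgt
  · have hκ : J * (1 - κ) ≤ 1 / 3 := hn.trans' (by gcongr; exact le_abs.2 (Or.inr (by
      have : (1 : ℝ) ≤ n := by exact_mod_cast hn1
      linarith)))
    have hdrift : 2 * π * (1 - κ) < ε :=
      lt_of_mul_lt_mul_left (a := (J : ℝ)) (by nlinarith [pi_pos]) hJ.le
    obtain ⟨x, hx, hgt⟩ := exists_abs_sin_mul_sin_gt (x₁ := x₁) (c := c) hκ₀ hκ₁
      (by linarith [min_le_right (√(1 - r ^ 2) - a) (1 - 2 * r)] : 2 * r + 2 * π * (1 - κ) < 1)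
    exact not_lt.2 (hin x (hIcc hx)).1 hgt

lemma exists_notMem_rotatedTable_of_slope {a r : ℝ} (hr : r < 1 / 2) (hra : a ^ 2 + r ^ 2 < 1) :
    ∃ L > 0, ∀ κ x₀ c : ℝ, 0 ≤ κ → κ ≤ 1 →
      ∃ x ∈ Icc x₀ (x₀ + L), (x, c + κ * (x - x₀)) ∉ rotatedTable a r := by
  obtain ⟨J, hJ⟩ := exists_notMem_rotatedTable_of_cos_eq_zero hr hra
  refine ⟨(J + 4) * π, by positivity, fun κ x₀ c hκ₀ hκ₁ => ?_⟩
  obtain ⟨x₁, hx₁, hcos⟩ := exists_mem_Icc_cos_eq (σ := 0) (by norm_num) (by norm_num) x₀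
  obtain ⟨x, hx, hout⟩ := hJ κ x₁ (c + κ * (x₁ - x₀)) hκ₀ hκ₁ hcos
  refine ⟨x, ⟨by linarith [hx₁.1, hx.1], by linarith [hx₁.2, hx.2]⟩, ?_⟩
  convert hout using 3
  ring

lemma exists_forall_exists_notMem_rotatedTable {a r : ℝ} (hr : r < 1 / 2)
    (hra : a ^ 2 + r ^ 2 < 1) :
    ∃ T > 0, ∀ A B α β : ℝ, α ^ 2 + β ^ 2 = 1 / 2 →
      ∃ t ∈ Icc 0 T, (A + t * α, B + t * β) ∉ rotatedTable a r := by
  obtain ⟨L, hL, hescape⟩ := exists_notMem_rotatedTable_of_slope hr hra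
  refine ⟨2 * L, by positivity, fun A B α β hαβ => ?_⟩
  wlog hβα : |β| ≤ |α| generalizing A B α β
  · obtain ⟨t, ht, hout⟩ := this B A β α (by linarith) (by linarith)
    exact ⟨t, ht, by rwa [mem_rotatedTable_swap] at hout⟩
  wlog hα : 0 ≤ α generalizing A α
  · obtain ⟨t, ht, hout⟩ :=
      this (-A) (-α) (by simpa using hαβ) (by simpa using hβα) (by linarith)
    refine ⟨t, ht, ?_⟩
    rwa [show -A + t * -α = -(A + t * α) by ring, mem_rotatedTable_neg_left] at hout
  wlog hβ : 0 ≤ β generalizing B β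
  · obtain ⟨t, ht, hout⟩ :=
      this (-B) (-β) (by simpa using hαβ) (by simpa using hβα) (by linarith)
    refine ⟨t, ht, ?_⟩
    rwa [show -B + t * -β = -(B + t * β) by ring, mem_rotatedTable_neg_right] at hout
  rw [abs_of_nonneg hα, abs_of_nonneg hβ] at hβα
  have hα' : 1 / 2 ≤ α := by nlinarith
  obtain ⟨x, hx, hout⟩ := hescape (β / α) A B (by positivity) (div_le_one_of_le₀ hβα hα)
  refine ⟨(x - A) / α, ⟨div_nonneg (by linarith [hx.1]) hα, ?_⟩, ?_⟩
  · rw [div_le_iff₀ (by linarith)]; nlinarith [hx.2]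
  · have hα₀ : α ≠ 0 := by positivity
    convert hout using 2
    exact Prod.ext (by field_simp; ring) (by field_simp)

theorem uniform_finite_horizon_general
    (l r : ℝ) (hr' : r < 1/2)
    (hlr : (l - 2) ^ 2 + r ^ 2 < 1) :
    ∃ T : ℝ, 0 < T ∧ ∀ θ₀ φ₀ v w : ℝ, v ^ 2 + w ^ 2 = 1 →
      ∃ t ∈ Set.Icc (0:ℝ) T,
        ¬ (|cos (θ₀ + t * v) - cos (φ₀ + t * w)| ≤ 2 * r ∧
           cos (θ₀ + t * v) + cos (φ₀ + t * w) ≤ 2 * l - 4) := by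
  obtain ⟨T, hT, hescape⟩ := exists_forall_exists_notMem_rotatedTable hr' hlr
  refine ⟨T, hT, fun θ₀ φ₀ v w hvw => ?_⟩
  obtain ⟨t, ht, hout⟩ :=
    hescape ((θ₀ + φ₀) / 2) ((θ₀ - φ₀) / 2) ((v + w) / 2) ((v - w) / 2)
      (by linear_combination hvw / 2)
  refine ⟨t, ht, ?_⟩
  rw [show 2 * l - 4 = 2 * (l - 2) by ring, ← half_add_half_sub_mem_rotatedTable_iff]
  convert hout using 3 <;> ring

theorem uniform_finite_horizon
    (l r : ℝ) (hl : 2 < l) (hl' : l < 3) (hr : 0 < r) (hr' : r < 1/2)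
    (hlr : (l - 2) ^ 2 + r ^ 2 < 1) :
    ∃ T : ℝ, 0 < T ∧ ∀ θ₀ φ₀ v w : ℝ, v ^ 2 + w ^ 2 = 1 →
      ∃ t ∈ Set.Icc (0:ℝ) T,
        ¬ (|cos (θ₀ + t * v) - cos (φ₀ + t * w)| ≤ 2 * r ∧
           cos (θ₀ + t * v) + cos (φ₀ + t * w) ≤ 2 * l - 4) :=
  uniform_finite_horizon_general l r hr' hlr
end
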